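/- arXiv:1907.03201 — 3 statements merged into one kernel-verified Lean document; each statement's English description precedes it below -/
import Mathlib

section
/- Let c be a partial proper edge-coloring of a graph G with colors α ≠ β, let H be the subgraph of edges colored α or β, and let v be a vertex with α missing at v but β not missing at v. Then the component of H containing v is a path (not a cycle) having v as an endpoint. -/
/-!
Properness gives every vertex at most one `α`-edge and one `β`-edge, so the `αβ`-subgraph `H`
has maximum degree two. A cycle uses two edges at each of its vertices, so in `H` it already
contains all edges at its vertices: its vertex set is closed under adjacency, hence is a whole
component. The vertex `v` has exactly one `H`-edge (its `β`-edge), so no cycle can lie in its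
component.
-/

open scoped Classical

/-- The spanning subgraph of edges of `G` colored `α` or `β` by `c`. -/
def twoColored {V : Type*} {N : ℕ} (G : SimpleGraph V) (c : Sym2 V → Option (Fin N))
    (α β : Fin N) : SimpleGraph V where
  Adj u w := G.Adj u w ∧ (c s(u, w) = some α ∨ c s(u, w) = some β)
  symm := ⟨fun u w h => ⟨h.1.symm, by rw [Sym2.eq_swap]; exact h.2⟩⟩
  loopless := ⟨fun u h => G.loopless.irrefl u h.1⟩

namespace SimpleGraph

variable {V : Type*} {H : SimpleGraph V}

namespace Walk.IsCycle

variable {u v w : V} {p : H.Walk u u}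

lemma encard_neighborSet_toSubgraph (hp : p.IsCycle) (hv : v ∈ p.support) :
    (p.toSubgraph.neighborSet v).encard = 2 := by
  rw [← p.finite_neighborSet_toSubgraph.cast_ncard_eq, hp.ncard_neighborSet_toSubgraph_eq_two hv]
  rfl

lemma two_le_encard_neighborSet (hp : p.IsCycle) (hv : v ∈ p.support) :
    2 ≤ (H.neighborSet v).encard :=
  hp.encard_neighborSet_toSubgraph hv ▸ Set.encard_le_encard (p.toSubgraph.neighborSet_subset v)

lemma neighborSet_toSubgraph_eq (hdeg : ∀ x, (H.neighborSet x).encard ≤ 2) (hp : p.IsCycle)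
    (hv : v ∈ p.support) : p.toSubgraph.neighborSet v = H.neighborSet v :=
  p.finite_neighborSet_toSubgraph.eq_of_subset_of_encard_le (p.toSubgraph.neighborSet_subset v)
    (hp.encard_neighborSet_toSubgraph hv ▸ hdeg v)

lemma mem_support_of_adj (hdeg : ∀ x, (H.neighborSet x).encard ≤ 2) (hp : p.IsCycle)
    (hv : v ∈ p.support) (hvw : H.Adj v w) : w ∈ p.support := by
  have hw : w ∈ p.toSubgraph.neighborSet v := by
    rwa [hp.neighborSet_toSubgraph_eq hdeg hv]
  exact p.mem_verts_toSubgraph.mp (p.toSubgraph.edge_vert (p.toSubgraph.adj_symm hw))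

lemma mem_support_of_reachable (hdeg : ∀ x, (H.neighborSet x).encard ≤ 2) (hp : p.IsCycle)
    (hv : v ∈ p.support) (hvw : H.Reachable v w) : w ∈ p.support := by
  obtain ⟨q⟩ := hvw
  induction q with
  | nil => exact hv
  | cons hadj _ ih => exact ih (hp.mem_support_of_adj hdeg hv hadj)

end Walk.IsCycle

lemma not_isCycle_of_reachable_of_encard_neighborSet_lt_two
    (hdeg : ∀ x, (H.neighborSet x).encard ≤ 2) {v w : V} (hv : (H.neighborSet v).encard < 2)
    (hvw : H.Reachable v w) (p : H.Walk w w) : ¬ p.IsCycle := fun hp =>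
  hv.not_ge (hp.two_le_encard_neighborSet
    (hp.mem_support_of_reachable hdeg p.start_mem_support hvw.symm))

end SimpleGraph

def IsProperPartialEdgeColoring {V : Type*} {N : ℕ} (G : SimpleGraph V)
    (c : Sym2 V → Option (Fin N)) : Prop :=
  ∀ u v w : V, G.Adj u v → G.Adj u w → v ≠ w →
    ∀ γ, c s(u, v) = some γ → c s(u, w) ≠ some γ

section ProperColoring

variable {V : Type*} {N : ℕ} {G : SimpleGraph V} {c : Sym2 V → Option (Fin N)}

lemma eq_of_adj_of_color_eq (hc : IsProperPartialEdgeColoring G c) {u x y : V} {γ : Fin N}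
    (hx : G.Adj u x) (hy : G.Adj u y)
    (hcx : c s(u, x) = some γ) (hcy : c s(u, y) = some γ) : x = y :=
  of_not_not fun hxy => hc u x y hx hy hxy γ hcx hcy

lemma encard_neighborSet_twoColored_le_two (hc : IsProperPartialEdgeColoring G c) (α β : Fin N)
    (u : V) : ((twoColored G c α β).neighborSet u).encard ≤ 2 := by
  have hcolor : ∀ γ, {x | G.Adj u x ∧ c s(u, x) = some γ}.encard ≤ 1 := fun γ =>
    Set.encard_le_one_iff.mpr fun x y hx hy => eq_of_adj_of_color_eq hc hx.1 hy.1 hx.2 hy.2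
  calc ((twoColored G c α β).neighborSet u).encard
      ≤ ({x | G.Adj u x ∧ c s(u, x) = some α} ∪
          {x | G.Adj u x ∧ c s(u, x) = some β}).encard :=
        Set.encard_le_encard fun x ⟨hx, hcx⟩ => hcx.imp (⟨hx, ·⟩) (⟨hx, ·⟩)
    _ ≤ 1 + 1 := (Set.encard_union_le _ _).trans (add_le_add (hcolor α) (hcolor β))
    _ = 2 := one_add_one_eq_two

lemma neighborSet_twoColored_eq_singleton (hc : IsProperPartialEdgeColoring G c) {α β : Fin N}
    {v w₀ : V} (hα : ∀ w, G.Adj v w → c s(v, w) ≠ some α)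
    (hw₀ : G.Adj v w₀) (hw₀β : c s(v, w₀) = some β) :
    (twoColored G c α β).neighborSet v = {w₀} := by
  ext x
  refine ⟨fun ⟨hx, hcx⟩ => ?_, fun hx => hx ▸ ⟨hw₀, Or.inr hw₀β⟩⟩
  exact eq_of_adj_of_color_eq hc hx hw₀ (hcx.resolve_left (hα x hx)) hw₀β

end ProperColoring

theorem stmt_5_general {V : Type*} {N : ℕ} (G : SimpleGraph V)
    (c : Sym2 V → Option (Fin N))
    (hproper : ∀ u v w : V, G.Adj u v → G.Adj u w → v ≠ w →
      ∀ γ, c s(u, v) = some γ → c s(u, w) ≠ some γ)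
    (α β : Fin N) (v : V)
    (hα : ∀ w, G.Adj v w → c s(v, w) ≠ some α)
    (hβ : ¬ ∀ w, G.Adj v w → c s(v, w) ≠ some β) :
    {w | (twoColored G c α β).Adj v w}.ncard = 1 ∧
    ∀ w, (twoColored G c α β).Reachable v w →
      ∀ p : (twoColored G c α β).Walk w w, ¬ p.IsCycle := by
  obtain ⟨w₀, hw₀, hw₀β⟩ : ∃ w₀, G.Adj v w₀ ∧ c s(v, w₀) = some β := by
    simpa using hβ
  have hv : (twoColored G c α β).neighborSet v = {w₀} :=
    neighborSet_twoColored_eq_singleton hproper hα hw₀ hw₀β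
  refine ⟨(congrArg Set.ncard hv).trans (Set.ncard_singleton w₀), fun w hvw =>
    SimpleGraph.not_isCycle_of_reachable_of_encard_neighborSet_lt_two
      (encard_neighborSet_twoColored_le_two hproper α β) ?_ hvw⟩
  rw [hv, Set.encard_singleton]
  norm_num

/-- If α is missing at v but β is not, then the component of v in the
αβ-subgraph is a path (it contains no cycle) having v as an endpoint (v has
exactly one incident αβ-edge). -/
theorem stmt_5 {V : Type*} {N : ℕ} (G : SimpleGraph V)
    (c : Sym2 V → Option (Fin N))
    (hproper : ∀ u v w : V, G.Adj u v → G.Adj u w → v ≠ w →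
      ∀ γ, c s(u, v) = some γ → c s(u, w) ≠ some γ)
    (α β : Fin N) (hαβ : α ≠ β) (v : V)
    (hα : ∀ w, G.Adj v w → c s(v, w) ≠ some α)
    (hβ : ¬ ∀ w, G.Adj v w → c s(v, w) ≠ some β) :
    {w | (twoColored G c α β).Adj v w}.ncard = 1 ∧
    ∀ w, (twoColored G c α β).Reachable v w →
      ∀ p : (twoColored G c α β).Walk w w, ¬ p.IsCycle :=
  stmt_5_general G c hproper α β v hα hβ
end

section
/- Vizing's theorem: every finite simple graph with maximum degree d admits a proper edge-coloring using at most d+1 colors. -/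
/-!
Colour the edges one at a time with `d + 1` colours, so that every vertex always misses a colour.
To colour an uncoloured edge `x y`, grow a fan at `x`: distinct neighbours
`y = f 0, f 1, …, f k` of `x` such that the edge `x (f (i + 1))` carries a colour missing at `f i`.
Shifting these colours one step down the fan moves the uncoloured edge to `x (f k)`, so it
suffices to find a colour missing at `x` and at the last vertex of some fan.

Let `b` be missing at `f k`. If `b` is also missing at `x` we are done; if the `b`-edge at `x`
leaves the fan, the fan grows. Otherwise it is `x (f (j + 1))`, so `b` is missing at `f j` as
well. Let `c` be missing at `x`. The `(c, b)`-Kempe chain through `f k` has maximum degree two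
and `f k`, `x`, `f j` are among its vertices of degree at most one, so it cannot contain both `x`
and `f j`. Swapping `c` and `b` on it yields a colour missing at `x` and at the end of one of the
fans `f 0, …, f j` or `f 0, …, f k`.
-/

open Function

namespace SimpleGraph

variable {V : Type*} {H : SimpleGraph V} {u₁ u₂ u₃ : V}

/-- Entering `a` from `v`, a path has at most one way to continue, so two such paths agree until
one of them ends; its end then has two neighbours on the other path. -/
private lemma not_isPath_cons_of_leaves
    (hH : ∀ v w, H.Adj v w → (H.neighborSet v \ {w}).Subsingleton)
    (h₂ : (H.neighborSet u₂).Subsingleton) (h₃ : (H.neighborSet u₃).Subsingleton)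
    (h₂₃ : u₂ ≠ u₃) {v a : V} (hva : H.Adj v a) (p : H.Walk a u₂) (q : H.Walk a u₃)
    (hp : (Walk.cons hva p).IsPath) (hq : (Walk.cons hva q).IsPath) : False := by
  induction p generalizing v with
  | nil =>
    cases q with
    | nil => exact h₂₃ rfl
    | cons h q =>
      rw [Walk.cons_isPath_iff] at hq
      exact hq.2 (by simp [h₂ hva.symm h])
  | cons h p ih =>
    cases q with
    | nil =>
      rw [Walk.cons_isPath_iff] at hp
      exact hp.2 (by simp [h₃ hva.symm h])
    | cons h' q =>
      have hw : _ = _ := hH _ v hva.symm ⟨h, ?_⟩ ⟨h', ?_⟩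
      · subst hw
        exact ih h₂ h₂₃ h q hp.of_cons hq.of_cons
      · rintro rfl; exact (Walk.cons_isPath_iff _ _).1 hp |>.2 (by simp)
      · rintro rfl; exact (Walk.cons_isPath_iff _ _).1 hq |>.2 (by simp)

/-- `hH` bounds all degrees by two: a component containing a vertex of degree at most one is a
path, which has only two ends. -/
theorem not_reachable_of_leaves
    (hH : ∀ v w, H.Adj v w → (H.neighborSet v \ {w}).Subsingleton)
    (h₁ : (H.neighborSet u₁).Subsingleton) (h₂ : (H.neighborSet u₂).Subsingleton)
    (h₃ : (H.neighborSet u₃).Subsingleton) (h₁₂ : u₁ ≠ u₂) (h₁₃ : u₁ ≠ u₃) (h₂₃ : u₂ ≠ u₃)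
    (hr : H.Reachable u₁ u₂) : ¬ H.Reachable u₁ u₃ := by
  rintro hr'
  obtain ⟨p, hp⟩ := hr.exists_isPath
  obtain ⟨q, hq⟩ := hr'.exists_isPath
  cases p with
  | nil => exact h₁₂ rfl
  | cons h p =>
    cases q with
    | nil => exact h₁₃ rfl
    | cons h' q =>
      obtain rfl : _ = _ := h₁ h h'
      exact not_isPath_cons_of_leaves hH h₂ h₃ h₂₃ h p q hp hq

end SimpleGraph

namespace Vizing

variable {V : Type*} {G : SimpleGraph V} {n : ℕ}

structure PartialEdgeColoring (G : SimpleGraph V) (n : ℕ) where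
  color : Sym2 V → Option (Fin n)
  mem_edgeSet : ∀ e a, color e = some a → e ∈ G.edgeSet
  eq_of_color_eq : ∀ u v w a, color s(u, v) = some a → color s(u, w) = some a → v = w

namespace PartialEdgeColoring

variable (C : PartialEdgeColoring G n) {u v w x y z : V} {a b c : Fin n} {e e' : Sym2 V}

def support : Set (Sym2 V) := {e | C.color e ≠ none}

def Missing (v : V) (a : Fin n) : Prop := ∀ w, C.color s(v, w) ≠ some a

def empty : PartialEdgeColoring G n where
  color _ := none
  mem_edgeSet _ _ h := nomatch h
  eq_of_color_eq _ _ _ _ h := nomatch h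

open Classical in
noncomputable def erase (e : Sym2 V) : PartialEdgeColoring G n where
  color := update C.color e none
  mem_edgeSet e' a h := by
    by_cases he : e' = e
    · simp [he] at h
    · exact C.mem_edgeSet e' a (by rwa [update_of_ne he] at h)
  eq_of_color_eq u v w a hv hw := by
    by_cases hv' : s(u, v) = e
    · simp [hv'] at hv
    by_cases hw' : s(u, w) = e
    · simp [hw'] at hw
    rw [update_of_ne hv'] at hv
    rw [update_of_ne hw'] at hw
    exact C.eq_of_color_eq u v w a hv hw

open Classical in
noncomputable def add (hxy : G.Adj x y) (hx : C.Missing x a)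
    (hy : C.Missing y a) : PartialEdgeColoring G n where
  color := update C.color s(x, y) (some a)
  mem_edgeSet e a' h := by
    by_cases he : e = s(x, y)
    · exact he ▸ hxy
    · exact C.mem_edgeSet e a' (by rwa [update_of_ne he] at h)
  eq_of_color_eq u v w a' hv hw := by
    have missing : ∀ t, s(u, t) = s(x, y) → C.Missing u a := by
      intro t ht
      rcases Sym2.eq_iff.1 ht with ⟨rfl, -⟩ | ⟨rfl, -⟩
      exacts [hx, hy]
    by_cases hv' : s(u, v) = s(x, y) <;> by_cases hw' : s(u, w) = s(x, y)
    · exact Sym2.congr_right.1 (hv'.trans hw'.symm)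
    · rw [hv', update_self] at hv
      rw [update_of_ne hw', ← hv] at hw
      exact absurd hw (missing v hv' w)
    · rw [hw', update_self] at hw
      rw [update_of_ne hv', ← hw] at hv
      exact absurd hv (missing w hw' v)
    · rw [update_of_ne hv'] at hv
      rw [update_of_ne hw'] at hw
      exact C.eq_of_color_eq u v w a' hv hw

variable {C}

lemma adj_of_color_eq (h : C.color s(u, v) = some a) : G.Adj u v := C.mem_edgeSet _ _ h

lemma exists_missing [Fintype (G.neighborSet v)] (hv : G.degree v < n) : ∃ a, C.Missing v a := by
  by_contra! h
  have hw : ∀ a, ∃ w, C.color s(v, w) = some a := by simpa [Missing] using h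
  choose w hw using hw
  have hinj : Injective fun a => (⟨w a, adj_of_color_eq (hw a)⟩ : G.neighborSet v) := by
    intro a a' haa'
    have hwa : w a = w a' := congrArg Subtype.val haa'
    exact Option.some.inj <| (hw a).symm.trans (hwa ▸ hw a')
  have := Fintype.card_le_of_injective _ hinj
  rw [Fintype.card_fin, G.card_neighborSet_eq_degree] at this
  omega

lemma support_erase : (C.erase e).support = C.support \ {e} := by
  ext e'
  by_cases he : e' = e <;> simp [support, erase, he]

lemma support_add (hxy : G.Adj x y) (hx : C.Missing x a) (hy : C.Missing y a) :
    (C.add hxy hx hy).support = insert s(x, y) C.support := by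
  ext e'
  by_cases he : e' = s(x, y) <;> simp [support, add, he]

@[simp]
lemma color_erase_self : (C.erase e).color e = none := by
  classical exact update_self ..

lemma color_erase_of_ne (he : e' ≠ e) : (C.erase e).color e' = C.color e' := by
  classical exact update_of_ne he ..

@[simp]
lemma color_add_self (hxy : G.Adj x y) (hx : C.Missing x a) (hy : C.Missing y a) :
    (C.add hxy hx hy).color s(x, y) = some a := by
  classical exact update_self ..

lemma color_add_of_ne (hxy : G.Adj x y) (hx : C.Missing x a) (hy : C.Missing y a)
    (he : e ≠ s(x, y)) : (C.add hxy hx hy).color e = C.color e := by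
  classical exact update_of_ne he ..

lemma Missing.erase (h : C.Missing v b) (e : Sym2 V) : (C.erase e).Missing v b := by
  intro w hw
  by_cases he : s(v, w) = e
  · simp [he] at hw
  · exact h w (by rwa [color_erase_of_ne he] at hw)

lemma missing_erase_of_color_eq (h : C.color s(x, z) = some a) : (C.erase s(x, z)).Missing x a := by
  intro w hw
  by_cases hwz : w = z
  · simp [hwz] at hw
  · rw [color_erase_of_ne (Sym2.congr_right.not.2 hwz)] at hw
    exact hwz (C.eq_of_color_eq x w z a hw h)

lemma Missing.add (h : C.Missing v b) (hba : b ≠ a) (hxy : G.Adj x y) (hx : C.Missing x a)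
    (hy : C.Missing y a) : (C.add hxy hx hy).Missing v b := by
  intro w hw
  by_cases he : s(v, w) = s(x, y)
  · simp only [he, color_add_self, Option.some.injEq] at hw
    exact hba hw.symm
  · exact h w (by rwa [color_add_of_ne hxy hx hy he] at hw)

structure IsFan (C : PartialEdgeColoring G n) (x : V) (f : ℕ → V) (k : ℕ) : Prop where
  adj : G.Adj x (f 0)
  color_zero : C.color s(x, f 0) = none
  step : ∀ i < k, ∃ a, C.color s(x, f (i + 1)) = some a ∧ C.Missing (f i) a
  injOn : Set.InjOn f (Set.Iic k)

namespace IsFan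

variable {f : ℕ → V} {i j k : ℕ}

lemma adj_of_le (hf : C.IsFan x f k) (hi : i ≤ k) : G.Adj x (f i) := by
  cases i with
  | zero => exact hf.adj
  | succ i =>
    obtain ⟨a, ha, -⟩ := hf.step i hi
    exact adj_of_color_eq ha

lemma lt_degree [Fintype (G.neighborSet x)] (hf : C.IsFan x f k) : k < G.degree x := by
  classical
  have := Finset.card_le_card_of_injOn f (s := Finset.range (k + 1)) (t := G.neighborFinset x)
    (fun i hi => by simpa using hf.adj_of_le (Nat.lt_succ_iff.1 (Finset.mem_range.1 hi)))
    (hf.injOn.mono fun i hi => Nat.lt_succ_iff.1 (Finset.mem_range.1 hi))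
  simpa using this

lemma of_le (hf : C.IsFan x f k) (hjk : j ≤ k) : C.IsFan x f j :=
  ⟨hf.adj, hf.color_zero, fun i hi => hf.step i (by omega), hf.injOn.mono (Set.Iic_subset_Iic.2 hjk)⟩

lemma eq_of_color_eq (hf : C.IsFan x f k) (hi : i < k) (hj : j < k)
    (h : C.color s(x, f (i + 1)) = some a) (h' : C.color s(x, f (j + 1)) = some a) : i = j := by
  have := hf.injOn (Set.mem_Iic.2 hi) (Set.mem_Iic.2 hj) (C.eq_of_color_eq _ _ _ a h h')
  omega

lemma snoc (hf : C.IsFan x f k) (hz : C.color s(x, z) = some b) (hb : C.Missing (f k) b)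
    (hzf : z ∉ f '' Set.Iic k) : C.IsFan x (update f (k + 1) z) (k + 1) := by
  have hf' : ∀ i ≤ k, update f (k + 1) z i = f i := fun i hi => update_of_ne (by omega) ..
  refine ⟨?_, ?_, fun i hi => ?_, fun i hi j hj hij => ?_⟩
  · simpa [hf' 0 (Nat.zero_le k)] using hf.adj
  · simpa [hf' 0 (Nat.zero_le k)] using hf.color_zero
  · rcases Nat.lt_succ_iff_lt_or_eq.1 hi with hi | rfl
    · rw [hf' i hi.le, hf' (i + 1) hi]
      exact hf.step i hi
    · rw [hf' i le_rfl, update_self]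
      exact ⟨b, hz, hb⟩
  · rcases Nat.le_or_eq_of_le_succ hi with hi | rfl <;>
      rcases Nat.le_or_eq_of_le_succ hj with hj | rfl
    · rw [hf' i hi, hf' j hj] at hij
      exact hf.injOn hi hj hij
    · rw [hf' i hi, update_self] at hij
      exact absurd ⟨i, hi, hij⟩ hzf
    · rw [hf' j hj, update_self] at hij
      exact absurd ⟨j, hj, hij.symm⟩ hzf
    · rfl

theorem exists_extend_of_missing (hf : C.IsFan x f k) (hx : C.Missing x b) (hk : C.Missing (f k) b) :
    ∃ C' : PartialEdgeColoring G n, insert s(x, f 0) C.support ⊆ C'.support := by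
  induction k generalizing C f with
  | zero => exact ⟨C.add hf.adj hx hk, (support_add hf.adj hx hk).ge⟩
  | succ k ih =>
    obtain ⟨a, ha, hya⟩ := hf.step 0 k.succ_pos
    have hab : b ≠ a := fun h => hx _ (h ▸ ha)
    have hne : ∀ {i j}, i ≤ k + 1 → j ≤ k + 1 → i ≠ j → s(x, f i) ≠ s(x, f j) :=
      fun hi hj hij h => hij (hf.injOn hi hj (Sym2.congr_right.1 h))
    set C₁ := (C.erase s(x, f 1)).add hf.adj (missing_erase_of_color_eq ha) (hya.erase _)
    have hC₁ : ∀ i, 2 ≤ i → i ≤ k + 1 → C₁.color s(x, f i) = C.color s(x, f i) := fun i hi hik => by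
      rw [color_add_of_ne _ _ _ (hne hik (by omega) (by omega)),
        color_erase_of_ne (hne hik (by omega) (by omega))]
    have hf₁ : C₁.IsFan x (f ∘ Nat.succ) k := by
      refine ⟨adj_of_color_eq ha, ?_, fun i hi => ?_, fun i hi j hj h => ?_⟩
      · show C₁.color s(x, f 1) = none
        rw [color_add_of_ne _ _ _ (hne (by omega) (by omega) one_ne_zero), color_erase_self]
      · obtain ⟨a', ha', hia'⟩ := hf.step (i + 1) (by omega)
        refine ⟨a', (hC₁ (i + 2) (by omega) (by omega)).trans ha', (hia'.erase _).add ?_ _ _ _⟩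
        rintro rfl
        exact absurd (hf.eq_of_color_eq (by omega) k.succ_pos ha' ha) (by omega)
      · simpa using hf.injOn (Set.mem_Iic.2 (by simp at hi; omega))
          (Set.mem_Iic.2 (by simp at hj; omega)) h
    obtain ⟨C', hC'⟩ := ih hf₁ ((hx.erase _).add hab _ _ _) ((hk.erase _).add hab _ _ _)
    refine ⟨C', subset_trans ?_ hC'⟩
    rw [support_add, support_erase]
    intro e he
    by_cases he' : e = s(x, f 1) <;> simp_all

lemma of_step {C' : PartialEdgeColoring G n} (hf : C.IsFan x f k)
    (h0 : C'.color s(x, f 0) = none)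
    (hstep : ∀ i < k, ∀ a, C.color s(x, f (i + 1)) = some a → C.Missing (f i) a →
      C'.color s(x, f (i + 1)) = some a ∧ C'.Missing (f i) a) : C'.IsFan x f k := by
  refine ⟨hf.adj, h0, fun i hi => ?_, hf.injOn⟩
  obtain ⟨a, ha, hia⟩ := hf.step i hi
  exact ⟨a, hstep i hi a ha hia⟩

end IsFan

variable (C) in
def kempeGraph (c b : Fin n) : SimpleGraph V where
  Adj u v := C.color s(u, v) = some c ∨ C.color s(u, v) = some b
  symm := ⟨fun u v h => by rwa [Sym2.eq_swap]⟩
  loopless := ⟨fun v h => G.loopless.irrefl v (by rcases h with h | h <;> exact adj_of_color_eq h)⟩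

lemma kempeGraph_neighborSet_sdiff_subsingleton (hvw : (C.kempeGraph c b).Adj v w) :
    ((C.kempeGraph c b).neighborSet v \ {w}).Subsingleton := by
  rintro u ⟨hu, hu'⟩ u' ⟨hu₁, hu₁'⟩
  simp only [Set.mem_singleton_iff] at hu' hu₁'
  simp only [SimpleGraph.mem_neighborSet, kempeGraph] at hu hu₁ hvw
  rcases hvw with h | h <;> rcases hu with h₁ | h₁ <;> rcases hu₁ with h₂ | h₂ <;>
    first
    | exact C.eq_of_color_eq v u u' _ h₁ h₂
    | exact absurd (C.eq_of_color_eq v u w _ h₁ h) hu'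
    | exact absurd (C.eq_of_color_eq v u' w _ h₂ h) hu₁'

lemma kempeGraph_neighborSet_subsingleton (hv : C.Missing v c ∨ C.Missing v b) :
    ((C.kempeGraph c b).neighborSet v).Subsingleton := by
  rintro u hu u' hu'
  simp only [SimpleGraph.mem_neighborSet, kempeGraph] at hu hu'
  rcases hv with hv | hv <;> rcases hu with h₁ | h₁ <;> rcases hu' with h₂ | h₂ <;>
    first
    | exact C.eq_of_color_eq v u u' _ h₁ h₂
    | exact absurd h₁ (hv u)
    | exact absurd h₂ (hv u')

lemma map_swap_color_of_not_adj (h : ¬ (C.kempeGraph c b).Adj u w) :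
    (C.color s(u, w)).map (Equiv.swap c b) = C.color s(u, w) := by
  simp only [kempeGraph, not_or] at h
  cases hc : C.color s(u, w) with
  | none => rfl
  | some a =>
    simp only [hc, Option.some.injEq] at h
    simp [Equiv.swap_apply_of_ne_of_ne h.1 h.2]

lemma map_swap_color_of_not_reachable_of_reachable
    (hu : ¬ (C.kempeGraph c b).Reachable v u) (hw : (C.kempeGraph c b).Reachable v w) :
    (C.color s(u, w)).map (Equiv.swap c b) = C.color s(u, w) :=
  map_swap_color_of_not_adj fun h => hu (hw.trans h.symm.reachable)

open Classical in
variable (C) in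
/-- Swap `c` and `b` on the Kempe chain through `v`. The colour of `s(u, w)` is read off at `u`;
this is symmetric because a `c`- or `b`-edge never leaves the chain. -/
noncomputable def kempeSwap (c b : Fin n) (v : V) : PartialEdgeColoring G n where
  color := Sym2.lift ⟨fun u w => if (C.kempeGraph c b).Reachable v u then
      (C.color s(u, w)).map (Equiv.swap c b) else C.color s(u, w), fun u w => by
    by_cases hu : (C.kempeGraph c b).Reachable v u <;>
      by_cases hw : (C.kempeGraph c b).Reachable v w <;>
      simp only [hu, hw, if_true, if_false, Sym2.eq_swap]
    · rw [Sym2.eq_swap]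
      exact map_swap_color_of_not_reachable_of_reachable hw hu
    · exact (map_swap_color_of_not_reachable_of_reachable hu hw).symm⟩
  mem_edgeSet e a h := by
    induction e using Sym2.ind with | _ u w => ?_
    simp only [Sym2.lift_mk] at h
    split_ifs at h
    · obtain ⟨a', ha', -⟩ := Option.map_eq_some_iff.1 h
      exact C.mem_edgeSet _ a' ha'
    · exact C.mem_edgeSet _ a h
  eq_of_color_eq u w w' a hw hw' := by
    simp only [Sym2.lift_mk] at hw hw'
    split_ifs at hw hw'
    · obtain ⟨a', ha', -⟩ := Option.map_eq_some_iff.1 hw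
      exact C.eq_of_color_eq u w w' a' ha'
        ((Option.map_injective (Equiv.injective _) (hw'.trans hw.symm)).trans ha')
    · exact C.eq_of_color_eq u w w' a hw hw'

lemma kempeSwap_color_of_reachable (hu : (C.kempeGraph c b).Reachable v u) (w : V) :
    (C.kempeSwap c b v).color s(u, w) = (C.color s(u, w)).map (Equiv.swap c b) := by
  simp [kempeSwap, hu]

lemma kempeSwap_color_of_not_reachable (hu : ¬ (C.kempeGraph c b).Reachable v u) (w : V) :
    (C.kempeSwap c b v).color s(u, w) = C.color s(u, w) := by
  simp [kempeSwap, hu]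

lemma kempeSwap_color_eq_none_iff : (C.kempeSwap c b v).color e = none ↔ C.color e = none := by
  induction e using Sym2.ind with | _ u w => ?_
  by_cases hu : (C.kempeGraph c b).Reachable v u
  · simp [kempeSwap_color_of_reachable hu]
  · simp [kempeSwap_color_of_not_reachable hu]

lemma support_kempeSwap : (C.kempeSwap c b v).support = C.support :=
  Set.ext fun _ => kempeSwap_color_eq_none_iff.not

lemma missing_kempeSwap_of_reachable (hu : (C.kempeGraph c b).Reachable v u) :
    (C.kempeSwap c b v).Missing u a ↔ C.Missing u (Equiv.swap c b a) := by
  simp [Missing, kempeSwap_color_of_reachable hu, Option.map_eq_some_iff, Equiv.swap_apply_eq_iff]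

lemma missing_kempeSwap_of_not_reachable (hu : ¬ (C.kempeGraph c b).Reachable v u) :
    (C.kempeSwap c b v).Missing u a ↔ C.Missing u a := by
  simp [Missing, kempeSwap_color_of_not_reachable hu]

lemma kempeSwap_color_of_ne (h : C.color s(u, w) = some a) (hac : a ≠ c) (hab : a ≠ b) :
    (C.kempeSwap c b v).color s(u, w) = some a := by
  by_cases hu : (C.kempeGraph c b).Reachable v u
  · simp [kempeSwap_color_of_reachable hu, h, Equiv.swap_apply_of_ne_of_ne hac hab]
  · rwa [kempeSwap_color_of_not_reachable hu]

lemma Missing.kempeSwap_of_ne (h : C.Missing u a) (hac : a ≠ c) (hab : a ≠ b) :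
    (C.kempeSwap c b v).Missing u a := by
  by_cases hu : (C.kempeGraph c b).Reachable v u
  · rwa [missing_kempeSwap_of_reachable hu, Equiv.swap_apply_of_ne_of_ne hac hab]
  · rwa [missing_kempeSwap_of_not_reachable hu]

namespace IsFan

variable {f : ℕ → V} {i j k : ℕ}

lemma kempeSwap_of_lt (hf : C.IsFan x f k) (hc : C.Missing x c) (hjk : j < k)
    (hz : C.color s(x, f (j + 1)) = some b) : (C.kempeSwap c b v).IsFan x f j :=
  (hf.of_le hjk.le).of_step (kempeSwap_color_eq_none_iff.2 hf.color_zero) fun i hi a ha hia => by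
    have hac : a ≠ c := fun h => hc _ (h ▸ ha)
    have hab : a ≠ b := fun h => by
      have := hf.eq_of_color_eq (by omega) hjk (h ▸ ha) hz
      omega
    exact ⟨kempeSwap_color_of_ne ha hac hab, hia.kempeSwap_of_ne hac hab⟩

lemma kempeSwap_of_not_reachable (hf : C.IsFan x f k) (hc : C.Missing x c) (hjk : j < k)
    (hz : C.color s(x, f (j + 1)) = some b) (hx : ¬ (C.kempeGraph c b).Reachable v x)
    (hj : ¬ (C.kempeGraph c b).Reachable v (f j)) : (C.kempeSwap c b v).IsFan x f k :=
  hf.of_step (kempeSwap_color_eq_none_iff.2 hf.color_zero) fun i hi a ha hia => by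
    refine ⟨by rwa [kempeSwap_color_of_not_reachable hx], ?_⟩
    by_cases hi' : (C.kempeGraph c b).Reachable v (f i)
    · have hac : a ≠ c := fun h => hc _ (h ▸ ha)
      have hab : a ≠ b := by
        rintro rfl
        obtain rfl := hf.eq_of_color_eq hi hjk ha hz
        exact hj hi'
      exact hia.kempeSwap_of_ne hac hab
    · exact (missing_kempeSwap_of_not_reachable hi').2 hia

theorem exists_extend_of_color_eq [G.LocallyFinite] (hdeg : ∀ v, G.degree v < n)
    (hf : C.IsFan x f k) (hb : C.Missing (f k) b) (hjk : j < k)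
    (hz : C.color s(x, f (j + 1)) = some b) :
    ∃ C' : PartialEdgeColoring G n, insert s(x, f 0) C.support ⊆ C'.support := by
  have hbj : C.Missing (f j) b := by
    obtain ⟨a, ha, hja⟩ := hf.step j hjk
    rwa [Option.some.inj (hz.symm.trans ha)]
  obtain ⟨c, hc⟩ := C.exists_missing (hdeg x)
  set R := (C.kempeGraph c b).Reachable (f k)
  have hleaves : ¬ (R x ∧ R (f j)) := fun ⟨hxR, hjR⟩ =>
    SimpleGraph.not_reachable_of_leaves (fun _ _ => kempeGraph_neighborSet_sdiff_subsingleton)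
      (kempeGraph_neighborSet_subsingleton (.inr hb))
      (kempeGraph_neighborSet_subsingleton (.inl hc))
      (kempeGraph_neighborSet_subsingleton (.inr hbj))
      (hf.adj_of_le le_rfl).ne.symm
      (fun h => by have := hf.injOn (Set.mem_Iic.2 le_rfl) (Set.mem_Iic.2 hjk.le) h; omega)
      (hf.adj_of_le hjk.le).ne hxR hjR
  rw [← support_kempeSwap (c := c) (b := b) (v := f k)]
  by_cases hxR : R x
  · have hjR : ¬ R (f j) := fun h => hleaves ⟨hxR, h⟩
    exact (hf.kempeSwap_of_lt hc hjk hz).exists_extend_of_missing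
      ((missing_kempeSwap_of_reachable hxR).2 (by rwa [Equiv.swap_apply_right]))
      ((missing_kempeSwap_of_not_reachable hjR).2 hbj)
  by_cases hjR : R (f j)
  · exact (hf.kempeSwap_of_lt hc hjk hz).exists_extend_of_missing
      ((missing_kempeSwap_of_not_reachable hxR).2 hc)
      ((missing_kempeSwap_of_reachable hjR).2 (by rwa [Equiv.swap_apply_left]))
  · exact (hf.kempeSwap_of_not_reachable hc hjk hz hxR hjR).exists_extend_of_missing
      ((missing_kempeSwap_of_not_reachable hxR).2 hc)
      ((missing_kempeSwap_of_reachable .rfl).2 (by rwa [Equiv.swap_apply_left]))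

theorem exists_extend_of_degree_lt [G.LocallyFinite] (hdeg : ∀ v, G.degree v < n)
    (hf : C.IsFan x f k) :
    ∃ C' : PartialEdgeColoring G n, insert s(x, f 0) C.support ⊆ C'.support := by
  induction hm : G.degree x - k using Nat.strong_induction_on generalizing f k with
  | _ m ih =>
  obtain ⟨b, hb⟩ := C.exists_missing (hdeg (f k))
  by_cases hbx : C.Missing x b
  · exact hf.exists_extend_of_missing hbx hb
  obtain ⟨z, hz⟩ : ∃ z, C.color s(x, z) = some b := by simpa [Missing] using hbx
  by_cases hzf : z ∈ f '' Set.Iic k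
  · obtain ⟨m, hm, rfl⟩ := hzf
    obtain ⟨j, rfl⟩ : ∃ j, m = j + 1 :=
      Nat.exists_eq_succ_of_ne_zero (by rintro rfl; simp [hf.color_zero] at hz)
    exact hf.exists_extend_of_color_eq hdeg hb hm hz
  · have hf' := hf.snoc hz hb hzf
    have := hf'.lt_degree
    simpa [update_of_ne] using ih _ (by omega) hf' rfl

end IsFan

lemma isFan_zero (hxy : G.Adj x y) (h : C.color s(x, y) = none) : C.IsFan x (fun _ => y) 0 :=
  ⟨hxy, h, fun _ hi => absurd hi (Nat.not_lt_zero _),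
    fun i hi j hj _ => by simp only [Set.mem_Iic, Nat.le_zero] at hi hj; omega⟩

end PartialEdgeColoring

open PartialEdgeColoring

theorem exists_edgeSet_subset_support [Finite V] [G.LocallyFinite] (hdeg : ∀ v, G.degree v < n) :
    ∃ C : PartialEdgeColoring G n, G.edgeSet ⊆ C.support := by
  suffices ∀ m (C : PartialEdgeColoring G n), (G.edgeSet \ C.support).ncard = m →
      ∃ C' : PartialEdgeColoring G n, G.edgeSet ⊆ C'.support from this _ empty rfl
  intro m
  induction m using Nat.strong_induction_on with
  | _ m ih =>
  intro C hm
  by_cases h : G.edgeSet ⊆ C.support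
  · exact ⟨C, h⟩
  obtain ⟨e, he, he'⟩ := Set.not_subset.1 h
  induction e using Sym2.ind with | _ x y => ?_
  obtain ⟨C', hC'⟩ := (isFan_zero he (not_not.1 he')).exists_extend_of_degree_lt hdeg
  refine ih _ (hm ▸ Set.ncard_lt_ncard ?_ (Set.toFinite _)) C' rfl
  refine ⟨Set.sdiff_subset_sdiff_right (subset_trans (Set.subset_insert _ _) hC'), fun h' => ?_⟩
  exact (h' ⟨he, he'⟩).2 (hC' (Set.mem_insert _ _))

end Vizing

theorem stmt_16_general {V : Type*} [Fintype V] (G : SimpleGraph V)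
    [DecidableRel G.Adj] (d : ℕ) (hd : ∀ v, G.degree v ≤ d) :
    ∃ c : Sym2 V → Fin (d + 1),
      ∀ u v w : V, G.Adj u v → G.Adj u w → v ≠ w → c s(u, v) ≠ c s(u, w) := by
  obtain ⟨C, hC⟩ := Vizing.exists_edgeSet_subset_support (n := d + 1) fun v => Nat.lt_succ_of_le (hd v)
  refine ⟨fun e => (C.color e).getD 0, fun u v w huv huw hvw h => hvw ?_⟩
  obtain ⟨a, ha⟩ := Option.ne_none_iff_exists'.1 (hC (G.mem_edgeSet.2 huv))
  obtain ⟨a', ha'⟩ := Option.ne_none_iff_exists'.1 (hC (G.mem_edgeSet.2 huw))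
  simp only [ha, ha', Option.getD_some] at h
  exact C.eq_of_color_eq u v w a ha (h ▸ ha')

/-- Vizing's theorem: every finite simple graph with maximum degree
d admits a proper edge-coloring using at most d+1 colors. -/
theorem stmt_16 {V : Type*} [Fintype V] [DecidableEq V] (G : SimpleGraph V)
    [DecidableRel G.Adj] (d : ℕ) (hd : ∀ v, G.degree v ≤ d) :
    ∃ c : Sym2 V → Fin (d + 1),
      ∀ u v w : V, G.Adj u v → G.Adj u w → v ≠ w → c s(u, v) ≠ c s(u, w) :=
  stmt_16_general G d hd
end

section
/- Let G be a simple graph with maximum degree d, partially properly edge-colored with colors {1,...,d+1}, and let F = (α, v, x₁, ..., x_k) be a u-fan with k ≥ 2. If x is any leaf of F, then coloring the edge v x with α yields a valid partial proper edge-coloring, provided α is missing at v at that moment; moreover, if α is not missing at v but some color β is missing at v, then after flipping the maximal αβ-path starting at v, the color α becomes missing at v, and at most one leaf of F loses the property that α is missing at it (namely, the leaf at the far endpoint of the flipped path, if any), so a leaf x with α missing at both v and x still exists and v x can be properly colored α. -/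
open scoped Classical

/-- Color `γ` is missing at vertex `u`: no colored edge incident to `u` has color `γ`. -/
def MissingAt {V : Type*} {N : ℕ} (G : SimpleGraph V) (c : Sym2 V → Option (Fin N))
    (γ : Fin N) (u : V) : Prop :=
  ∀ w, G.Adj u w → c s(u, w) ≠ some γ

/-!
Flipping the αβ-component `P` of `v` keeps the colouring proper and, since β was missing at `v`,
makes α missing at `v`; outside `P` nothing changes, so a leaf can lose α only if it lies in `P`.
In the αβ-subgraph every vertex has at most two neighbours, and `v` and the leaves (missing β,
resp. α) have at most one. A connected graph of maximum degree two has at most two vertices of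
degree at most one, so `P` contains at most one leaf; as `k ≥ 2`, some leaf keeps α missing, and
the uncoloured edge from `v` to it can be coloured α.
-/

namespace SimpleGraph

variable {V : Type*} {H : SimpleGraph V}

lemma Walk.IsPath.getVert_ne_getVert {u w : V} {p : H.Walk u w} (hp : p.IsPath) {i j : ℕ}
    (hi : i ≤ p.length) (hj : j ≤ p.length) (hij : i ≠ j) : p.getVert i ≠ p.getVert j :=
  fun h => hij (hp.getVert_injOn hi hj h)

lemma Walk.IsPath.nontrivial_neighborSet_of_mem_support {u w a : V} {q : H.Walk u w}
    (hq : q.IsPath) (ha : a ∈ q.support) (hau : a ≠ u) (haw : a ≠ w) :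
    (H.neighborSet a).Nontrivial := by
  obtain ⟨n, rfl, hn⟩ := Walk.mem_support_iff_exists_getVert.1 ha
  have hn0 : n ≠ 0 := by rintro rfl; exact hau q.getVert_zero
  have hnl : n ≠ q.length := by rintro rfl; exact haw q.getVert_length
  have hpred : H.Adj (q.getVert n) (q.getVert (n - 1)) := by
    simpa [Nat.sub_add_cancel (Nat.pos_of_ne_zero hn0)] using
      (q.adj_getVert_succ (i := n - 1) (by omega)).symm
  exact ⟨_, hpred, _, q.adj_getVert_succ (by omega),
    hq.getVert_ne_getVert (by omega) (by omega) (by omega)⟩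

/-- A path cannot turn back and each of its vertices has only one other neighbour, so two paths
leaving `v` through its unique neighbour never branch. -/
lemma Walk.IsPath.getVert_eq_getVert
    (hdeg : ∀ u w₁ w₂ w₃, H.Adj u w₁ → H.Adj u w₂ → H.Adj u w₃ → w₁ = w₂ ∨ w₂ = w₃ ∨ w₁ = w₃)
    {v a b : V} (hv : (H.neighborSet v).Subsingleton) {p : H.Walk v a} {q : H.Walk v b}
    (hp : p.IsPath) (hq : q.IsPath) :
    ∀ n, n ≤ p.length → n ≤ q.length → p.getVert n = q.getVert n
  | 0, _, _ => by simp only [Walk.getVert_zero]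
  | 1, hnp, hnq => by
    refine hv ?_ ?_
    · simpa only [Walk.getVert_zero, mem_neighborSet] using p.adj_getVert_succ (i := 0) hnp
    · simpa only [Walk.getVert_zero, mem_neighborSet] using q.adj_getVert_succ (i := 0) hnq
  | m + 2, hnp, hnq => by
    have hm := getVert_eq_getVert hdeg hv hp hq m (by omega) (by omega)
    have hm1 := getVert_eq_getVert hdeg hv hp hq (m + 1) (by omega) (by omega)
    have hprev := (p.adj_getVert_succ (i := m) (by omega)).symm
    have hnext := p.adj_getVert_succ (i := m + 1) (by omega)
    have hnext' := q.adj_getVert_succ (i := m + 1) (by omega)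
    rw [← hm1] at hnext'
    rcases hdeg _ _ _ _ hprev hnext hnext' with h | h | h
    · exact absurd h (hp.getVert_ne_getVert (by omega) hnp (by omega))
    · exact h
    · exact absurd (hm ▸ h) (hq.getVert_ne_getVert (by omega) hnq (by omega))

lemma eq_of_reachable_of_subsingleton_neighborSet
    (hdeg : ∀ u w₁ w₂ w₃, H.Adj u w₁ → H.Adj u w₂ → H.Adj u w₃ → w₁ = w₂ ∨ w₂ = w₃ ∨ w₁ = w₃)
    {v a b : V} (hv : (H.neighborSet v).Subsingleton) (ha : (H.neighborSet a).Subsingleton)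
    (hb : (H.neighborSet b).Subsingleton) (hav : a ≠ v) (hbv : b ≠ v)
    (hra : H.Reachable v a) (hrb : H.Reachable v b) : a = b := by
  have key : ∀ {a b : V} (p : H.Walk v a) (q : H.Walk v b), p.IsPath → q.IsPath →
      p.length ≤ q.length → (H.neighborSet a).Subsingleton → a ≠ v → a = b := by
    intro a b p q hp hq hlen ha hav
    have hmem : a ∈ q.support := by
      rw [← p.getVert_length, hp.getVert_eq_getVert hdeg hv hq _ le_rfl hlen]
      exact q.getVert_mem_support _
    by_contra hab
    exact (hq.nontrivial_neighborSet_of_mem_support hmem hav hab).not_subsingleton ha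
  obtain ⟨p, hp⟩ := hra.some.toPath
  obtain ⟨q, hq⟩ := hrb.some.toPath
  rcases le_total p.length q.length with h | h
  · exact key p q hp hq h ha hav
  · exact (key q p hq hp h hb hbv).symm

end SimpleGraph

section Coloring

variable {V : Type*} {N : ℕ} {G : SimpleGraph V} {c : Sym2 V → Option (Fin N)} {α β : Fin N}

def IsProperPartial (G : SimpleGraph V) (c : Sym2 V → Option (Fin N)) : Prop :=
  ∀ u w w' : V, G.Adj u w → G.Adj u w' → w ≠ w' → ∀ γ, c s(u, w) = some γ → c s(u, w') ≠ some γ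

noncomputable def kempeSwap (c : Sym2 V → Option (Fin N)) (α β : Fin N) (P : Set V)
    (e : Sym2 V) : Option (Fin N) :=
  if (∃ u ∈ P, u ∈ e) ∧ c e = some α then some β
  else if (∃ u ∈ P, u ∈ e) ∧ c e = some β then some α
  else c e

lemma twoColored_degree_le_two (hc : IsProperPartial G c) (u w₁ w₂ w₃ : V)
    (h₁ : (twoColored G c α β).Adj u w₁) (h₂ : (twoColored G c α β).Adj u w₂)
    (h₃ : (twoColored G c α β).Adj u w₃) : w₁ = w₂ ∨ w₂ = w₃ ∨ w₁ = w₃ := by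
  by_contra! hne
  -- two of the three edges share one of the colours α, β
  rcases h₁ with ⟨hg₁, e₁ | e₁⟩ <;> rcases h₂ with ⟨hg₂, e₂ | e₂⟩ <;>
    rcases h₃ with ⟨hg₃, e₃ | e₃⟩
  all_goals first
    | exact hc u w₁ w₂ hg₁ hg₂ hne.1 _ e₁ e₂
    | exact hc u w₂ w₃ hg₂ hg₃ hne.2.1 _ e₂ e₃
    | exact hc u w₁ w₃ hg₁ hg₃ hne.2.2 _ e₁ e₃

lemma neighborSet_twoColored_subsingleton (hc : IsProperPartial G c) {u : V}
    (hu : MissingAt G c α u ∨ MissingAt G c β u) :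
    ((twoColored G c α β).neighborSet u).Subsingleton := by
  rintro w₁ ⟨hg₁, hc₁⟩ w₂ ⟨hg₂, hc₂⟩
  by_contra hne
  rcases hu with hu | hu
  · exact hc u w₁ w₂ hg₁ hg₂ hne β (hc₁.resolve_left (hu w₁ hg₁)) (hc₂.resolve_left (hu w₂ hg₂))
  · exact hc u w₁ w₂ hg₁ hg₂ hne α (hc₁.resolve_right (hu w₁ hg₁))
      (hc₂.resolve_right (hu w₂ hg₂))

lemma kempeSwap_eq_map_swap_of_mem {P : Set V} {u : V} (hu : u ∈ P) (w : V) :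
    kempeSwap c α β P s(u, w) = (c s(u, w)).map (Equiv.swap α β) := by
  have hmem : ∃ t ∈ P, t ∈ s(u, w) := ⟨u, hu, Sym2.mem_mk_left u w⟩
  unfold kempeSwap
  simp only [hmem, true_and]
  rcases c s(u, w) with _ | γ
  · simp
  · simp only [Option.some.injEq, Option.map_some]
    split_ifs with hα hβ
    · rw [hα, Equiv.swap_apply_left]
    · rw [hβ, Equiv.swap_apply_right]
    · rw [Equiv.swap_apply_of_ne_of_ne hα hβ]

lemma kempeSwap_eq_of_not_mem {P : Set V}
    (hP : ∀ u ∈ P, ∀ u', (twoColored G c α β).Adj u u' → u' ∈ P)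
    {u w : V} (huw : G.Adj u w) (hu : u ∉ P) : kempeSwap c α β P s(u, w) = c s(u, w) := by
  have hcol : c s(u, w) = some α ∨ c s(u, w) = some β → ¬ ∃ t ∈ P, t ∈ s(u, w) := by
    rintro h ⟨t, htP, ht⟩
    rcases Sym2.mem_iff.1 ht with rfl | rfl
    · exact hu htP
    · exact hu (hP t htP u ⟨huw.symm, Sym2.eq_swap ▸ h⟩)
  unfold kempeSwap
  rw [if_neg fun h => hcol (.inl h.2) h.1, if_neg fun h => hcol (.inr h.2) h.1]

lemma IsProperPartial.kempeSwap (hc : IsProperPartial G c) {P : Set V}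
    (hP : ∀ u ∈ P, ∀ u', (twoColored G c α β).Adj u u' → u' ∈ P) :
    IsProperPartial G (kempeSwap c α β P) := by
  intro u w w' hw hw' hne γ e e'
  by_cases hu : u ∈ P
  · rw [kempeSwap_eq_map_swap_of_mem hu, Option.map_eq_some_iff] at e e'
    obtain ⟨δ, hδ, rfl⟩ := e
    obtain ⟨δ', hδ', hδδ'⟩ := e'
    rw [(Equiv.swap α β).injective hδδ'] at hδ'
    exact hc u w w' hw hw' hne δ hδ hδ'
  · rw [kempeSwap_eq_of_not_mem hP hw hu] at e
    rw [kempeSwap_eq_of_not_mem hP hw' hu] at e'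
    exact hc u w w' hw hw' hne γ e e'

lemma missingAt_kempeSwap_of_mem {P : Set V} {u : V} (hu : u ∈ P) (hβ : MissingAt G c β u) :
    MissingAt G (kempeSwap c α β P) α u := by
  intro w hw e
  rw [kempeSwap_eq_map_swap_of_mem hu, Option.map_eq_some_iff] at e
  obtain ⟨δ, hδ, hδα⟩ := e
  rw [Equiv.swap_apply_eq_iff, Equiv.swap_apply_left] at hδα
  exact hβ w hw (hδα ▸ hδ)

lemma MissingAt.kempeSwap_of_not_mem {P : Set V}
    (hP : ∀ u ∈ P, ∀ u', (twoColored G c α β).Adj u u' → u' ∈ P) {γ : Fin N} {u : V}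
    (hu : u ∉ P) (hγ : MissingAt G c γ u) : MissingAt G (kempeSwap c α β P) γ u :=
  fun w hw => kempeSwap_eq_of_not_mem hP hw hu ▸ hγ w hw

lemma IsProperPartial.recolor (hc : IsProperPartial G c) {γ : Fin N} {v x : V}
    (hv : MissingAt G c γ v) (hx : MissingAt G c γ x) :
    IsProperPartial G (fun e => if e = s(v, x) then some γ else c e) := by
  intro u w w' hw hw' hne δ e e'
  have hγ_missing : ∀ {w w'}, G.Adj u w' → s(u, w) = s(v, x) → c s(u, w') ≠ some γ := by
    intro w w' hw' h
    rcases Sym2.eq_iff.1 h with ⟨rfl, -⟩ | ⟨rfl, -⟩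
    exacts [hv w' hw', hx w' hw']
  dsimp only at e e'
  split_ifs at e e' with h h' h'
  · exact hne (Sym2.congr_right.1 (h.trans h'.symm))
  · exact hγ_missing hw' h (Option.some_inj.1 e ▸ e')
  · exact hγ_missing hw h' (Option.some_inj.1 e' ▸ e)
  · exact hc u w w' hw hw' hne δ e e'

end Coloring

theorem stmt_19_general {V : Type*} (G : SimpleGraph V) (d : ℕ)
    (c : Sym2 V → Option (Fin (d + 1)))
    (hproper : ∀ u w w' : V, G.Adj u w → G.Adj u w' → w ≠ w' →
      ∀ γ, c s(u, w) = some γ → c s(u, w') ≠ some γ)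
    (α β : Fin (d + 1)) (v : V) (k : ℕ) (x : ℕ → V) (hk : 2 ≤ k)
    (hadj : ∀ i, 1 ≤ i → i ≤ k → G.Adj v (x i))
    (hinj : ∀ i j, 1 ≤ i → i ≤ k → 1 ≤ j → j ≤ k → i ≠ j → x i ≠ x j)
    (hleaf : ∀ i, 1 ≤ i → i ≤ k → MissingAt G c α (x i))
    (hβv : MissingAt G c β v)
    (P : Set V) (hPdef : P = {w | (twoColored G c α β).Reachable v w})
    (c' : Sym2 V → Option (Fin (d + 1)))
    (hc' : ∀ e, c' e =
      if (∃ u ∈ P, u ∈ e) ∧ c e = some α then some β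
      else if (∃ u ∈ P, u ∈ e) ∧ c e = some β then some α
      else c e) :
    MissingAt G c' α v ∧
    (∀ i j, 1 ≤ i → i ≤ k → 1 ≤ j → j ≤ k →
      ¬ MissingAt G c' α (x i) → ¬ MissingAt G c' α (x j) → i = j) ∧
    (∃ i, 1 ≤ i ∧ i ≤ k ∧ MissingAt G c' α (x i) ∧
      ∀ u w w' : V, G.Adj u w → G.Adj u w' → w ≠ w' → ∀ γ,
        (if s(u, w) = s(v, x i) then some α else c' s(u, w)) = some γ →
        (if s(u, w') = s(v, x i) then some α else c' s(u, w')) ≠ some γ) := by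
  obtain rfl : c' = kempeSwap c α β P := funext hc'
  have hmemP : ∀ w, w ∈ P ↔ (twoColored G c α β).Reachable v w := Set.ext_iff.1 hPdef
  have hclosed : ∀ u ∈ P, ∀ u', (twoColored G c α β).Adj u u' → u' ∈ P :=
    fun u hu u' h => (hmemP u').2 (((hmemP u).1 hu).trans h.reachable)
  have hv : MissingAt G (kempeSwap c α β P) α v :=
    missingAt_kempeSwap_of_mem ((hmemP v).2 .rfl) hβv
  have hlost_mem : ∀ i, 1 ≤ i → i ≤ k → ¬ MissingAt G (kempeSwap c α β P) α (x i) → x i ∈ P :=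
    fun i hi hik hlost =>
      by_contra fun hx => hlost ((hleaf i hi hik).kempeSwap_of_not_mem hclosed hx)
  have hlost_unique : ∀ i j, 1 ≤ i → i ≤ k → 1 ≤ j → j ≤ k →
      ¬ MissingAt G (kempeSwap c α β P) α (x i) →
      ¬ MissingAt G (kempeSwap c α β P) α (x j) → i = j := by
    intro i j hi hik hj hjk hlost_i hlost_j
    by_contra hij
    refine hinj i j hi hik hj hjk hij (SimpleGraph.eq_of_reachable_of_subsingleton_neighborSet
      (twoColored_degree_le_two hproper) (neighborSet_twoColored_subsingleton hproper (.inr hβv))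
      (neighborSet_twoColored_subsingleton hproper (.inl (hleaf i hi hik)))
      (neighborSet_twoColored_subsingleton hproper (.inl (hleaf j hj hjk)))
      (hadj i hi hik).ne' (hadj j hj hjk).ne'
      ((hmemP _).1 (hlost_mem i hi hik hlost_i)) ((hmemP _).1 (hlost_mem j hj hjk hlost_j)))
  obtain ⟨i, hi, hik, hxi⟩ : ∃ i, 1 ≤ i ∧ i ≤ k ∧ MissingAt G (kempeSwap c α β P) α (x i) := by
    by_contra! h
    exact absurd (hlost_unique 1 2 le_rfl (by omega) one_le_two hk (h 1 le_rfl (by omega))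
      (h 2 one_le_two hk)) (by norm_num)
  exact ⟨hv, hlost_unique, i, hi, hik, hxi,
    (IsProperPartial.kempeSwap hproper hclosed).recolor hv hxi⟩

/-- Activating a u-fan (α, v, x₁, …, x_k), k ≥ 2.  If β is missing at
the center v (and α is not), then after flipping the maximal αβ-path starting at v
(i.e. swapping α and β on the component of v in the αβ-subgraph), α becomes
missing at v, at most one leaf loses the property that α is missing at it, and
hence some leaf xᵢ has α missing at both v and xᵢ, so coloring v xᵢ with α yields
a proper partial coloring. -/
theorem stmt_19 {V : Type*} (G : SimpleGraph V) (d : ℕ)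
    (c : Sym2 V → Option (Fin (d + 1)))
    (hproper : ∀ u w w' : V, G.Adj u w → G.Adj u w' → w ≠ w' →
      ∀ γ, c s(u, w) = some γ → c s(u, w') ≠ some γ)
    (α β : Fin (d + 1)) (v : V) (k : ℕ) (x : ℕ → V) (hk : 2 ≤ k)
    (hadj : ∀ i, 1 ≤ i → i ≤ k → G.Adj v (x i))
    (hinj : ∀ i j, 1 ≤ i → i ≤ k → 1 ≤ j → j ≤ k → i ≠ j → x i ≠ x j)
    (huncol : ∀ i, 1 ≤ i → i ≤ k → c s(v, x i) = none)
    (hleaf : ∀ i, 1 ≤ i → i ≤ k → MissingAt G c α (x i))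
    (hcenter : ¬ MissingAt G c α v)
    (hβv : MissingAt G c β v)
    (P : Set V) (hPdef : P = {w | (twoColored G c α β).Reachable v w})
    (c' : Sym2 V → Option (Fin (d + 1)))
    (hc' : ∀ e, c' e =
      if (∃ u ∈ P, u ∈ e) ∧ c e = some α then some β
      else if (∃ u ∈ P, u ∈ e) ∧ c e = some β then some α
      else c e) :
    MissingAt G c' α v ∧
    (∀ i j, 1 ≤ i → i ≤ k → 1 ≤ j → j ≤ k →
      ¬ MissingAt G c' α (x i) → ¬ MissingAt G c' α (x j) → i = j) ∧
    (∃ i, 1 ≤ i ∧ i ≤ k ∧ MissingAt G c' α (x i) ∧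
      ∀ u w w' : V, G.Adj u w → G.Adj u w' → w ≠ w' → ∀ γ,
        (if s(u, w) = s(v, x i) then some α else c' s(u, w)) = some γ →
        (if s(u, w') = s(v, x i) then some α else c' s(u, w')) ≠ some γ) :=
  stmt_19_general G d c hproper α β v k x hk hadj hinj hleaf hβv P hPdef c' hc'
end
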